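/- arXiv:1910.00502 — 3 statements merged into one kernel-verified Lean document; each statement's English description precedes it below -/
import Mathlib

section
/- The iteration Δ^0 = conv(Δ) ∩ ℤ^n, Δ^i = Mid(Δ^{i-1}) ∪ Δ, is non-increasing after the first step (Δ^{i+1} ⊆ Δ^i for all i ≥ 1), stabilizes after finitely many steps, and its stable value is the maximal Δ-mediated set Δ*. -/
/-!
The set `conv(Δ)` is convex, so `Mid` maps `Δ⁰` into itself and `Δ¹ ⊆ Δ⁰`; since
`L ↦ Mid(L) ∪ Δ` is monotone, the whole sequence decreases. It lives in the finite set `Δ⁰`,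
so it stabilizes, and its stable value is a fixed point of `L ↦ Mid(L) ∪ Δ`, i.e.
`Δ`-mediated.
Conversely, if `L` is `Δ`-mediated then no point of `L \ Δ` is an extreme point of `conv(L)`,
being the midpoint of two distinct points of `L`; by Krein–Milman `conv(L) ⊆ conv(Δ)`, so
`L ⊆ Δ⁰`, and monotonicity propagates `L ⊆ Δⁱ` to every `i`.
-/

open Set

/-- Cast an integer lattice point to a real point. -/
def toR {n : ℕ} (p : Fin n → ℤ) : Fin n → ℝ := fun i => (p i : ℝ)

/-- A lattice point all of whose coordinates are even, i.e., a point of `(2ℤ)^n`. -/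
def Even2 {n : ℕ} (p : Fin n → ℤ) : Prop := ∀ i, 2 ∣ p i

/-- The set of midpoints of pairs of distinct even points of `L`. -/
def Mid2 {n : ℕ} (L : Set (Fin n → ℤ)) : Set (Fin n → ℤ) :=
  {m | ∃ s ∈ L, ∃ t ∈ L, Even2 s ∧ Even2 t ∧ s ≠ t ∧ s + t = 2 • m}

/-- `L ⊆ ℤ^n` is `Δ`-mediated if it contains `Δ` and every element of `L`
is a midpoint of two distinct even points of `L` or belongs to `Δ`. -/
def IsMediated {n : ℕ} (Δ L : Set (Fin n → ℤ)) : Prop :=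
  L.Finite ∧ Δ ⊆ L ∧ L ⊆ Mid2 L ∪ Δ

/-- The lattice points of the convex hull `conv(Δ) ∩ ℤ^n`. -/
def convZ {n : ℕ} (Δ : Set (Fin n → ℤ)) : Set (Fin n → ℤ) :=
  {p | toR p ∈ convexHull ℝ (toR '' Δ)}

open Topology

lemma isClosedEmbedding_toR {n : ℕ} : IsClosedEmbedding (toR (n := n)) :=
  .piMap fun _ => Int.isClosedEmbedding_coe_real

lemma convZ_finite {n : ℕ} {Δ : Set (Fin n → ℤ)} (hΔ : Δ.Finite) : (convZ Δ).Finite :=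
  (isClosedEmbedding_toR.isCompact_preimage
    ((hΔ.image toR).isCompact_convexHull ℝ)).finite_of_discrete

lemma exists_openSegment_of_mem_mid2 {n : ℕ} {L : Set (Fin n → ℤ)} {m : Fin n → ℤ}
    (hm : m ∈ Mid2 L) :
    ∃ s ∈ L, ∃ t ∈ L, s ≠ t ∧ toR m ∈ openSegment ℝ (toR s) (toR t) := by
  obtain ⟨s, hs, t, ht, -, -, hst, hsum⟩ := hm
  refine ⟨s, hs, t, ht, hst, 1 / 2, 1 / 2, by norm_num, by norm_num, by norm_num, ?_⟩
  funext i
  have hi : (s i : ℝ) + t i = 2 * m i := by exact_mod_cast congrFun hsum i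
  simp only [Pi.add_apply, Pi.smul_apply, toR, smul_eq_mul]
  linarith

lemma mid2_mono {n : ℕ} : Monotone (Mid2 (n := n)) := by
  rintro A B hAB m ⟨s, hs, t, ht, hst⟩
  exact ⟨s, hAB hs, t, hAB ht, hst⟩

lemma mid2_convZ_subset {n : ℕ} (Δ : Set (Fin n → ℤ)) : Mid2 (convZ Δ) ⊆ convZ Δ := by
  intro m hm
  obtain ⟨s, hs, t, ht, -, hmst⟩ := exists_openSegment_of_mem_mid2 hm
  exact (convex_convexHull ℝ _).openSegment_subset hs ht hmst

lemma extremePoints_convexHull_toR_subset {n : ℕ} {Δ L : Set (Fin n → ℤ)}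
    (hL : L ⊆ Mid2 L ∪ Δ) : (convexHull ℝ (toR '' L)).extremePoints ℝ ⊆ toR '' Δ := by
  intro x hx
  obtain ⟨q, hq, rfl⟩ := extremePoints_convexHull_subset hx
  refine (hL hq).elim (fun hmid => ?_) (mem_image_of_mem toR)
  obtain ⟨s, hs, t, ht, hst, hseg⟩ := exists_openSegment_of_mem_mid2 hmid
  obtain ⟨hsq, htq⟩ := (mem_extremePoints.1 hx).2
    _ (subset_convexHull ℝ _ (mem_image_of_mem toR hs))
    _ (subset_convexHull ℝ _ (mem_image_of_mem toR ht)) hseg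
  exact absurd (isClosedEmbedding_toR.injective (hsq.trans htq.symm)) hst

lemma subset_convZ_of_subset_mid2_union {n : ℕ} {Δ L : Set (Fin n → ℤ)} (hΔ : Δ.Finite)
    (hLfin : L.Finite) (hL : L ⊆ Mid2 L ∪ Δ) : L ⊆ convZ Δ := by
  have hhull : convexHull ℝ (toR '' L) ⊆ convexHull ℝ (toR '' Δ) :=
    calc convexHull ℝ (toR '' L)
        = closure (convexHull ℝ ((convexHull ℝ (toR '' L)).extremePoints ℝ)) :=
          (closure_convexHull_extremePoints ((hLfin.image toR).isCompact_convexHull ℝ)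
            (convex_convexHull ℝ _)).symm
      _ ⊆ closure (convexHull ℝ (toR '' Δ)) :=
          closure_mono (convexHull_mono (extremePoints_convexHull_toR_subset hL))
      _ = convexHull ℝ (toR '' Δ) := ((hΔ.image toR).isClosed_convexHull ℝ).closure_eq
  exact fun p hp => hhull (subset_convexHull ℝ _ (mem_image_of_mem toR hp))

section Iteration

variable {α : Type*} {F : α → α} {D : ℕ → α}

lemma recursion_eq_of_succ_eq (hD : ∀ i, D (i + 1) = F (D i)) {N : ℕ} (hN : D (N + 1) = D N)
    {k : ℕ} (hk : N ≤ k) : D k = D N := by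
  induction k, hk using Nat.le_induction with
  | base => rfl
  | succ k _ ih => rw [hD, ih, ← hD, hN]

variable [Preorder α]

lemma Monotone.antitone_recursion (hF : Monotone F) (hD : ∀ i, D (i + 1) = F (D i))
    (h10 : D 1 ≤ D 0) : Antitone D := by
  refine antitone_nat_of_succ_le fun i => ?_
  induction i with
  | zero => exact h10
  | succ i ih => exact (hD _).trans_le ((hF ih).trans_eq (hD i).symm)

lemma Monotone.le_recursion_of_le_map (hF : Monotone F) (hD : ∀ i, D (i + 1) = F (D i)) {x : α}
    (hx : x ≤ F x) (hx0 : x ≤ D 0) (i : ℕ) : x ≤ D i := by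
  induction i with
  | zero => exact hx0
  | succ i ih => rw [hD]; exact hx.trans (hF ih)

end Iteration

lemma Set.exists_succ_eq_of_antitone {α : Type*} {D : ℕ → Set α} (hD : Antitone D)
    (h0 : (D 0).Finite) : ∃ N, D (N + 1) = D N := by
  by_contra! hne
  have hcard : ∀ k, (D k).ncard + k ≤ (D 0).ncard := by
    intro k
    induction k with
    | zero => simp
    | succ k ih =>
      have hlt : (D (k + 1)).ncard < (D k).ncard :=
        ncard_lt_ncard ((hD (Nat.le_add_right k 1)).ssubset_of_ne (hne k))
          (h0.subset (hD k.zero_le))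
      omega
  have hbound := hcard ((D 0).ncard + 1)
  omega

theorem iteration_stabilizes_at_MMS_general {n : ℕ} (Δ : Set (Fin n → ℤ))
    (hfin : Δ.Finite)
    (D : ℕ → Set (Fin n → ℤ)) (h0 : D 0 = convZ Δ)
    (hstep : ∀ i, D (i + 1) = Mid2 (D i) ∪ Δ) :
    (∀ i, 1 ≤ i → D (i + 1) ⊆ D i) ∧
    ∃ N, (∀ k, N ≤ k → D k = D N) ∧
      IsMediated Δ (D N) ∧ ∀ L, IsMediated Δ L → L ⊆ D N := by
  have hF : Monotone fun L => Mid2 L ∪ Δ := fun _ _ h => union_subset_union_left Δ (mid2_mono h)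
  have h10 : D 1 ⊆ D 0 := by
    rw [hstep, h0]
    exact union_subset (mid2_convZ_subset Δ) fun p hp =>
      subset_convexHull ℝ _ (mem_image_of_mem toR hp)
  have hanti : Antitone D := hF.antitone_recursion hstep h10
  have hD0 : (D 0).Finite := h0 ▸ convZ_finite hfin
  obtain ⟨N, hN⟩ := Set.exists_succ_eq_of_antitone hanti hD0
  have hfix : D N = Mid2 (D N) ∪ Δ := hN.symm.trans (hstep N)
  refine ⟨fun i _ => hanti i.le_succ, N,
    fun k => recursion_eq_of_succ_eq (F := fun L => Mid2 L ∪ Δ) hstep hN,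
    ⟨hD0.subset (hanti N.zero_le), subset_union_right.trans hfix.symm.subset, hfix.subset⟩,
    fun L hL => hF.le_recursion_of_le_map hstep hL.2.2
      (h0 ▸ subset_convZ_of_subset_mid2_union hfin hL.1 hL.2.2) N⟩

/-- Reznick's iteration `Δ⁰ = conv(Δ) ∩ ℤ^n`, `Δ^i = Mid(Δ^{i-1}) ∪ Δ` is
non-increasing after the first step, stabilizes after finitely many steps, and
its stable value is the maximal `Δ`-mediated set. -/
theorem iteration_stabilizes_at_MMS {n : ℕ} (Δ : Set (Fin n → ℤ))
    (hfin : Δ.Finite) (heven : ∀ p ∈ Δ, Even2 p)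
    (D : ℕ → Set (Fin n → ℤ)) (h0 : D 0 = convZ Δ)
    (hstep : ∀ i, D (i + 1) = Mid2 (D i) ∪ Δ) :
    (∀ i, 1 ≤ i → D (i + 1) ⊆ D i) ∧
    ∃ N, (∀ k, N ≤ k → D k = D N) ∧
      IsMediated Δ (D N) ∧ ∀ L, IsMediated Δ L → L ⊆ D N :=
  iteration_stabilizes_at_MMS_general Δ hfin D h0 hstep
end

section
/- For Δ = {(0,0,0), (0,2,2), (2,0,2), (2,2,0)} ⊆ (2ℤ)³, the maximal Δ-mediated set equals (conv(Δ) ∩ ℤ³) \ {(1,1,1)} and this set equals Δ ∪ Mid(Δ); in particular, Δ is an M-simplex but not an H-simplex. -/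
/-!
A `Δ`-mediated set `L` satisfies every linear inequality `w ⬝ᵥ p ≤ B` valid on `Δ`: a maximizer
of `w ⬝ᵥ p` over `L`, with ties broken lexicographically, cannot be the midpoint of two distinct
points of `L`, so it lies in `Δ`. Hence the maximal mediated set lies in the tetrahedron
`conv(Δ)`, whose only even lattice points are its vertices; so `Δ* ⊆ Δ ∪ Mid(Δ)`, and equality
holds because `Δ ∪ Mid(Δ)` is itself mediated. The tetrahedron has eleven lattice points: the four
vertices, the six edge midpoints, and the centre `(1,1,1)`, which is not a midpoint of two
vertices since every vertex has coordinate sum `0` or `4`.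
-/

open Set

section General

variable {n : ℕ} {Δ L L' : Set (Fin n → ℤ)}

lemma Mid2_subset_Mid2_of_even (h : ∀ p ∈ L, Even2 p → p ∈ L') : Mid2 L ⊆ Mid2 L' :=
  fun _ ⟨s, hs, t, ht, hse, hte, hst, hsum⟩ => ⟨s, h s hs hse, t, h t ht hte, hse, hte, hst, hsum⟩

lemma Mid2_mono (h : L ⊆ L') : Mid2 L ⊆ Mid2 L' :=
  Mid2_subset_Mid2_of_even fun _ hp _ => h hp

lemma Mid2_finite (hΔ : Δ.Finite) : (Mid2 Δ).Finite := by
  refine ((hΔ.prod hΔ).image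
    fun st : (Fin n → ℤ) × (Fin n → ℤ) => fun i => (st.1 i + st.2 i) / 2).subset ?_
  rintro m ⟨s, hs, t, ht, -, -, -, hsum⟩
  refine ⟨(s, t), ⟨hs, ht⟩, funext fun i => ?_⟩
  have hi : s i + t i = 2 * m i := by simpa using congrFun hsum i
  simp [hi]

lemma isMediated_union_Mid2 (hΔ : Δ.Finite) : IsMediated Δ (Δ ∪ Mid2 Δ) :=
  ⟨hΔ.union (Mid2_finite hΔ), subset_union_left,
    union_subset subset_union_right ((Mid2_mono subset_union_left).trans subset_union_left)⟩

lemma notMem_Mid2_of_forall_le {G : Type*} [AddCommMonoid G] [LinearOrder G]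
    [IsOrderedCancelAddMonoid G] {φ : (Fin n → ℤ) →+ G} (hφ : Function.Injective φ)
    {p : Fin n → ℤ} (hmax : ∀ q ∈ L, φ q ≤ φ p) : p ∉ Mid2 L := by
  rintro ⟨s, hs, t, ht, -, -, hst, hsum⟩
  have hsum' : φ s + φ t = φ p + φ p := by rw [← map_add, hsum, two_smul, map_add]
  have hs_eq : φ s = φ p := (hmax s hs).antisymm <| not_lt.1 fun hlt =>
    (add_lt_add_of_lt_of_le hlt (hmax t ht)).ne hsum'
  have ht_eq : φ t = φ p := (hmax t ht).antisymm <| not_lt.1 fun hlt =>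
    (add_lt_add_of_le_of_lt (hmax s hs) hlt).ne hsum'
  exact hst (hφ (hs_eq.trans ht_eq.symm))

def lexObjective (w : Fin n → ℤ) : (Fin n → ℤ) →+ ℤ ×ₗ Lex (Fin n → ℤ) where
  toFun p := toLex (w ⬝ᵥ p, toLex p)
  map_zero' := by simp
  map_add' p q := by rw [dotProduct_add]; rfl

lemma lexObjective_injective (w : Fin n → ℤ) : Function.Injective (lexObjective w) :=
  fun _ _ h => by
    simpa [lexObjective] using congrArg (fun x : ℤ ×ₗ Lex (Fin n → ℤ) => ofLex (ofLex x).2) h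

lemma IsMediated.dotProduct_le (h : IsMediated Δ L) {w : Fin n → ℤ} {B : ℤ}
    (hΔ : ∀ d ∈ Δ, w ⬝ᵥ d ≤ B) : ∀ q ∈ L, w ⬝ᵥ q ≤ B := by
  obtain ⟨hfin, -, hmed⟩ := h
  rcases L.eq_empty_or_nonempty with rfl | hne
  · simp
  obtain ⟨p, hpL, hmax⟩ := exists_max_image L (lexObjective w) hfin hne
  have hpΔ : p ∈ Δ := (hmed hpL).resolve_left
    (notMem_Mid2_of_forall_le (lexObjective_injective w) hmax)
  exact fun q hq => (Prod.Lex.monotone_fst _ _ (hmax q hq)).trans (hΔ p hpΔ)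

lemma subset_convZ : Δ ⊆ convZ Δ :=
  fun _ hp => subset_convexHull ℝ _ (mem_image_of_mem _ hp)

lemma mem_convZ_of_add_eq {s t m : Fin n → ℤ} (hs : s ∈ convZ Δ) (ht : t ∈ convZ Δ)
    (hsum : s + t = 2 • m) : m ∈ convZ Δ := by
  have hm : toR m = (1 / 2 : ℝ) • toR s + (1 / 2 : ℝ) • toR t := funext fun i => by
    have hi : (s i : ℝ) + t i = 2 * m i := by exact_mod_cast by simpa using congrFun hsum i
    simp only [toR, Pi.add_apply, Pi.smul_apply, smul_eq_mul]
    linarith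
  simpa [convZ, hm] using
    convex_convexHull ℝ (toR '' Δ) hs ht (by norm_num) (by norm_num) (by norm_num)

lemma Mid2_subset_convZ : Mid2 Δ ⊆ convZ Δ :=
  fun _ ⟨_, hs, _, ht, _, _, _, hsum⟩ =>
    mem_convZ_of_add_eq (subset_convZ hs) (subset_convZ ht) hsum

lemma dotProduct_le_of_mem_convZ {w : Fin n → ℤ} {B : ℤ} (hΔ : ∀ d ∈ Δ, w ⬝ᵥ d ≤ B)
    {p : Fin n → ℤ} (hp : p ∈ convZ Δ) : w ⬝ᵥ p ≤ B := by
  have hcast : ∀ q : Fin n → ℤ, toR w ⬝ᵥ toR q = ((w ⬝ᵥ q : ℤ) : ℝ) := fun q => by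
    simp [toR, dotProduct]
  have hlin : IsLinearMap ℝ fun x : Fin n → ℝ => toR w ⬝ᵥ x :=
    ⟨fun x y => dotProduct_add _ x y, fun c x => dotProduct_smul c _ x⟩
  have hhull : convexHull ℝ (toR '' Δ) ⊆ {x | toR w ⬝ᵥ x ≤ B} := by
    refine convexHull_min ?_ (convex_halfSpace_le hlin _)
    rintro _ ⟨d, hd, rfl⟩
    simpa [hcast] using hΔ d hd
  exact_mod_cast (hcast p).symm.trans_le (hhull hp)

end General

section Tetrahedron

def tetraVertices : Set (Fin 3 → ℤ) := {![0,0,0], ![0,2,2], ![2,0,2], ![2,2,0]}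

def tetraPoints : Set (Fin 3 → ℤ) :=
  {p | p 0 + p 1 + p 2 ≤ 4 ∧ p 2 ≤ p 0 + p 1 ∧ p 1 ≤ p 0 + p 2 ∧ p 0 ≤ p 1 + p 2}

lemma subset_tetraPoints {S : Set (Fin 3 → ℤ)}
    (hS : ∀ w B, (∀ d ∈ tetraVertices, w ⬝ᵥ d ≤ B) → ∀ p ∈ S, w ⬝ᵥ p ≤ B) :
    S ⊆ tetraPoints := by
  have facet : ∀ w B, (∀ d ∈ tetraVertices, w ⬝ᵥ d ≤ B) →
      ∀ p ∈ S, w 0 * p 0 + w 1 * p 1 + w 2 * p 2 ≤ B := fun w B hB p hp => by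
    simpa [dotProduct, Fin.sum_univ_three] using hS w B hB p hp
  intro p hp
  have h₁ := facet ![1, 1, 1] 4 (by simp [tetraVertices, dotProduct, Fin.sum_univ_three]) p hp
  have h₂ := facet ![-1, -1, 1] 0 (by simp [tetraVertices, dotProduct, Fin.sum_univ_three]) p hp
  have h₃ := facet ![-1, 1, -1] 0 (by simp [tetraVertices, dotProduct, Fin.sum_univ_three]) p hp
  have h₄ := facet ![1, -1, -1] 0 (by simp [tetraVertices, dotProduct, Fin.sum_univ_three]) p hp
  simp only [Matrix.cons_val] at h₁ h₂ h₃ h₄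
  refine ⟨?_, ?_, ?_, ?_⟩ <;> linarith

lemma vec3_eq {p : Fin 3 → ℤ} {a b c : ℤ} (h₀ : p 0 = a) (h₁ : p 1 = b) (h₂ : p 2 = c) :
    p = ![a, b, c] :=
  funext fun i => by fin_cases i <;> simpa

lemma eq_of_mem_tetraPoints {p : Fin 3 → ℤ} (hp : p ∈ tetraPoints) :
    p = ![0,0,0] ∨ p = ![0,2,2] ∨ p = ![2,0,2] ∨ p = ![2,2,0] ∨
      p = ![0,1,1] ∨ p = ![1,0,1] ∨ p = ![1,1,0] ∨ p = ![1,1,2] ∨ p = ![1,2,1] ∨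
      p = ![2,1,1] ∨ p = ![1,1,1] := by
  obtain ⟨h₁, h₂, h₃, h₄⟩ := hp
  obtain h | h | h : p 0 = 0 ∨ p 0 = 1 ∨ p 0 = 2 := by omega
  · obtain ⟨a, b⟩ | ⟨a, b⟩ | ⟨a, b⟩ :
        (p 1 = 0 ∧ p 2 = 0) ∨ (p 1 = 1 ∧ p 2 = 1) ∨ (p 1 = 2 ∧ p 2 = 2) := by omega
    all_goals simp [vec3_eq h a b]
  · obtain ⟨a, b⟩ | ⟨a, b⟩ | ⟨a, b⟩ | ⟨a, b⟩ | ⟨a, b⟩ :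
        (p 1 = 0 ∧ p 2 = 1) ∨ (p 1 = 1 ∧ p 2 = 0) ∨ (p 1 = 1 ∧ p 2 = 2) ∨
          (p 1 = 2 ∧ p 2 = 1) ∨ (p 1 = 1 ∧ p 2 = 1) := by omega
    all_goals simp [vec3_eq h a b]
  · obtain ⟨a, b⟩ | ⟨a, b⟩ | ⟨a, b⟩ :
        (p 1 = 0 ∧ p 2 = 2) ∨ (p 1 = 2 ∧ p 2 = 0) ∨ (p 1 = 1 ∧ p 2 = 1) := by omega
    all_goals simp [vec3_eq h a b]

lemma mem_tetraVertices_of_even {p : Fin 3 → ℤ} (hp : p ∈ tetraPoints) (he : Even2 p) :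
    p ∈ tetraVertices := by
  obtain ⟨h₁, h₂, h₃, h₄⟩ := hp
  have e₀ := he 0; have e₁ := he 1; have e₂ := he 2
  obtain ⟨a, b, c⟩ | ⟨a, b, c⟩ | ⟨a, b, c⟩ | ⟨a, b, c⟩ :
      (p 0 = 0 ∧ p 1 = 0 ∧ p 2 = 0) ∨ (p 0 = 0 ∧ p 1 = 2 ∧ p 2 = 2) ∨
        (p 0 = 2 ∧ p 1 = 0 ∧ p 2 = 2) ∨ (p 0 = 2 ∧ p 1 = 2 ∧ p 2 = 0) := by omega
  all_goals simp [tetraVertices, vec3_eq a b c]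

lemma even2_of_mem_tetraVertices {d : Fin 3 → ℤ} (hd : d ∈ tetraVertices) : Even2 d := by
  simp only [tetraVertices, mem_insert_iff, mem_singleton_iff] at hd
  rcases hd with rfl | rfl | rfl | rfl <;> intro i <;> fin_cases i <;> decide

lemma mem_Mid2_tetraVertices {s t m : Fin 3 → ℤ} (hs : s ∈ tetraVertices)
    (ht : t ∈ tetraVertices) (hst : s ≠ t) (hsum : s + t = 2 • m) : m ∈ Mid2 tetraVertices :=
  ⟨s, hs, t, ht, even2_of_mem_tetraVertices hs, even2_of_mem_tetraVertices ht, hst, hsum⟩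

lemma center_not_mem : ![1,1,1] ∉ tetraVertices ∪ Mid2 tetraVertices := by
  have hcoord : ∀ d ∈ tetraVertices, d 0 + d 1 + d 2 = 0 ∨ d 0 + d 1 + d 2 = 4 := by
    simp [tetraVertices]
  rintro (h | ⟨s, hs, t, ht, -, -, -, hsum⟩)
  · simp [tetraVertices] at h
  · have h₀ := congrFun hsum 0; have h₁ := congrFun hsum 1; have h₂ := congrFun hsum 2
    simp only [Pi.add_apply, Pi.smul_apply, Matrix.cons_val_zero, Matrix.cons_val_one,
      Matrix.cons_val, Int.nsmul_eq_mul, Nat.cast_ofNat, mul_one] at h₀ h₁ h₂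
    rcases hcoord s hs with hs' | hs' <;> rcases hcoord t ht with ht' | ht' <;> omega

lemma tetraPoints_subset :
    tetraPoints ⊆ insert ![1,1,1] (tetraVertices ∪ Mid2 tetraVertices) := by
  have v₀ : ![0,0,0] ∈ tetraVertices := by simp [tetraVertices]
  have v₁ : ![0,2,2] ∈ tetraVertices := by simp [tetraVertices]
  have v₂ : ![2,0,2] ∈ tetraVertices := by simp [tetraVertices]
  have v₃ : ![2,2,0] ∈ tetraVertices := by simp [tetraVertices]
  have mid : ∀ {s t m}, s ∈ tetraVertices → t ∈ tetraVertices → s ≠ t → s + t = 2 • m →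
      m ∈ insert ![1,1,1] (tetraVertices ∪ Mid2 tetraVertices) :=
    fun hs ht hst hsum => Or.inr (Or.inr (mem_Mid2_tetraVertices hs ht hst hsum))
  intro p hp
  rcases eq_of_mem_tetraPoints hp with rfl | rfl | rfl | rfl | rfl | rfl | rfl | rfl | rfl |
    rfl | rfl
  · exact Or.inr (Or.inl v₀)
  · exact Or.inr (Or.inl v₁)
  · exact Or.inr (Or.inl v₂)
  · exact Or.inr (Or.inl v₃)
  · exact mid v₀ v₁ (by decide) (by decide)
  · exact mid v₀ v₂ (by decide) (by decide)
  · exact mid v₀ v₃ (by decide) (by decide)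
  · exact mid v₁ v₂ (by decide) (by decide)
  · exact mid v₁ v₃ (by decide) (by decide)
  · exact mid v₂ v₃ (by decide) (by decide)
  · exact mem_insert _ _

lemma center_mem_convZ : ![1,1,1] ∈ convZ tetraVertices :=
  mem_convZ_of_add_eq (s := ![0,1,1]) (t := ![2,1,1])
    (Mid2_subset_convZ (mem_Mid2_tetraVertices (s := ![0,0,0]) (t := ![0,2,2])
      (by simp [tetraVertices]) (by simp [tetraVertices]) (by decide) (by decide)))
    (Mid2_subset_convZ (mem_Mid2_tetraVertices (s := ![2,0,2]) (t := ![2,2,0])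
      (by simp [tetraVertices]) (by simp [tetraVertices]) (by decide) (by decide)))
    (by decide)

end Tetrahedron

/-- For `Δ = {(0,0,0),(0,2,2),(2,0,2),(2,2,0)}` the maximal mediated set equals
`(conv(Δ) ∩ ℤ³) \ {(1,1,1)}`, which equals `Δ ∪ Mid(Δ)`; in particular `Δ` is
an M-simplex but not an H-simplex. -/
theorem dim3_M_simplex (M : Set (Fin 3 → ℤ))
    (hmed : IsMediated ({![0,0,0], ![0,2,2], ![2,0,2], ![2,2,0]} : Set (Fin 3 → ℤ)) M)
    (hmax : ∀ L, IsMediated ({![0,0,0], ![0,2,2], ![2,0,2], ![2,2,0]} : Set (Fin 3 → ℤ)) L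
      → L ⊆ M) :
    M = convZ ({![0,0,0], ![0,2,2], ![2,0,2], ![2,2,0]} : Set (Fin 3 → ℤ)) \ {![1,1,1]} ∧
    M = ({![0,0,0], ![0,2,2], ![2,0,2], ![2,2,0]} : Set (Fin 3 → ℤ)) ∪
          Mid2 ({![0,0,0], ![0,2,2], ![2,0,2], ![2,2,0]} : Set (Fin 3 → ℤ)) ∧
    M ≠ convZ ({![0,0,0], ![0,2,2], ![2,0,2], ![2,2,0]} : Set (Fin 3 → ℤ)) := by
  change IsMediated tetraVertices M at hmed
  change ∀ L, IsMediated tetraVertices L → L ⊆ M at hmax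
  change M = convZ tetraVertices \ {![1,1,1]} ∧ M = tetraVertices ∪ Mid2 tetraVertices ∧
    M ≠ convZ tetraVertices
  have hM_tetra : M ⊆ tetraPoints := subset_tetraPoints fun _ _ => hmed.dotProduct_le
  have hM : M = tetraVertices ∪ Mid2 tetraVertices := by
    refine subset_antisymm ?_ (hmax _ (isMediated_union_Mid2 (by simp [tetraVertices])))
    calc M ⊆ Mid2 M ∪ tetraVertices := hmed.2.2
      _ ⊆ Mid2 tetraVertices ∪ tetraVertices := union_subset_union_left _ <|
          Mid2_subset_Mid2_of_even fun p hp he => mem_tetraVertices_of_even (hM_tetra hp) he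
      _ = tetraVertices ∪ Mid2 tetraVertices := union_comm _ _
  have hM_conv : M = convZ tetraVertices \ {![1,1,1]} := by
    refine hM ▸ subset_antisymm ?_ ?_
    · exact subset_sdiff_singleton (union_subset subset_convZ Mid2_subset_convZ) center_not_mem
    · exact sdiff_singleton_subset_iff.2 <| (subset_tetraPoints
        fun _ _ hB _ hp => dotProduct_le_of_mem_convZ hB hp).trans tetraPoints_subset
  refine ⟨hM_conv, hM, fun h => ?_⟩
  have hcenter := center_mem_convZ
  rw [← h, hM_conv] at hcenter
  exact hcenter.2 rfl
end

section
/- Conversely, every unimodular affine transformation T(x) = A x + b with A ∈ GL_n(ℤ) and b ∈ (2ℤ)^n is maximal mediated set preserving; in particular, for every simplicial set Δ ⊆ (2ℤ)^n one has T(Δ*) = T(Δ)*. -/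
open Set

/-- The maximal `Δ`-mediated set: the union of all `Δ`-mediated sets. -/
def MMS {n : ℕ} (Δ : Set (Fin n → ℤ)) : Set (Fin n → ℤ) := ⋃₀ {L | IsMediated Δ L}

/-- A `k`-dimensional simplicial set: `k+1` affinely independent even lattice points. -/
def IsSimplicial {n : ℕ} (k : ℕ) (Δ : Set (Fin n → ℤ)) : Prop :=
  (∀ p ∈ Δ, Even2 p) ∧ ∃ f : Fin (k + 1) → (Fin n → ℤ),
    Set.range f = Δ ∧ AffineIndependent ℝ (fun i => toR (f i))

/-- The set of integer points whose real image lies in `T(toR(Δ))`,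
i.e., the integral realization of the image `T(Δ)`. -/
def ImgZ {n : ℕ} (T : (Fin n → ℝ) → (Fin n → ℝ)) (Δ : Set (Fin n → ℤ)) :
    Set (Fin n → ℤ) := toR ⁻¹' (T '' (toR '' Δ))

/-- `T : ℝ^n → ℝ^n` is maximal mediated set preserving. -/
def MMSPreserving {n : ℕ} (T : (Fin n → ℝ) → (Fin n → ℝ)) : Prop :=
  ∀ (k : ℕ) (Δ : Set (Fin n → ℤ)), IsSimplicial k Δ →
    (T '' (toR '' Δ) ⊆ Set.range (toR (n := n)) ∧ IsSimplicial k (ImgZ T Δ)) ∧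
    Set.BijOn T (toR '' MMS Δ) (toR '' MMS (ImgZ T Δ)) ∧
    Set.BijOn T (toR '' convZ Δ) (toR '' convZ (ImgZ T Δ))

/-!
An integral affine bijection `e(p) = Ap + b` with `b` even maps even points to even points and
midpoints to midpoints, so it carries `Δ`-mediated sets to `e(Δ)`-mediated sets; applying this to
`e` and `e⁻¹` gives `e(Δ*) = e(Δ)*`. The real map `T(x) = Ax + b` agrees with `e` on `ℤ^n` and its
inverse is again integral, so `T` also matches up the lattice points of `conv(Δ)` and
`conv(e(Δ))`, and preserves affine independence.
-/

open Matrix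

section LatticeAffine

variable {n : ℕ}

lemma toR_injective : Function.Injective (toR (n := n)) :=
  fun _ _ h => funext fun i => Int.cast_injective (congrFun h i)

lemma toR_mulVec_add (A : Matrix (Fin n) (Fin n) ℤ) (b p : Fin n → ℤ) :
    toR (A *ᵥ p + b) = A.map (Int.cast : ℤ → ℝ) *ᵥ toR p + toR b := by
  funext i
  simp [toR, Matrix.mulVec, dotProduct]

lemma even2_iff_eq_two_smul {p : Fin n → ℤ} : Even2 p ↔ ∃ v, p = 2 • v := by
  refine ⟨fun hp => ⟨fun i => p i / 2, funext fun i => ?_⟩, ?_⟩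
  · simp [Int.mul_ediv_cancel' (hp i)]
  · rintro ⟨v, rfl⟩ i
    simp

lemma Even2.map_linear {p : Fin n → ℤ} (hp : Even2 p)
    (f : (Fin n → ℤ) →ₗ[ℤ] (Fin n → ℤ)) : Even2 (f p) := by
  obtain ⟨v, rfl⟩ := even2_iff_eq_two_smul.1 hp
  exact even2_iff_eq_two_smul.2 ⟨f v, f.map_smul 2 v⟩

lemma Even2.add {p q : Fin n → ℤ} (hp : Even2 p) (hq : Even2 q) : Even2 (p + q) :=
  fun i => dvd_add (hp i) (hq i)

lemma Even2.map_affine {p : Fin n → ℤ} (hp : Even2 p)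
    {f : (Fin n → ℤ) →ᵃ[ℤ] (Fin n → ℤ)} (hf : Even2 (f 0)) : Even2 (f p) := by
  rw [f.decomp]
  exact (hp.map_linear f.linear).add hf

lemma AffineMap.add_eq_two_smul {V W : Type*} [AddCommGroup V] [AddCommGroup W]
    (f : V →ᵃ[ℤ] W) {s t m : V} (h : s + t = 2 • m) : f s + f t = 2 • f m := by
  have hf (x : V) : f x = f.linear x + f 0 := congrFun f.decomp x
  rw [hf s, hf t, hf m, add_add_add_comm, ← map_add, h, map_nsmul]
  abel

lemma IsMediated.image {Δ L : Set (Fin n → ℤ)} (hL : IsMediated Δ L)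
    {f : (Fin n → ℤ) →ᵃ[ℤ] (Fin n → ℤ)} (hf : Function.Injective f) (hf0 : Even2 (f 0)) :
    IsMediated (f '' Δ) (f '' L) := by
  obtain ⟨hfin, hΔL, hmid⟩ := hL
  refine ⟨hfin.image f, image_mono hΔL, ?_⟩
  rintro _ ⟨x, hx, rfl⟩
  rcases hmid hx with ⟨s, hs, t, ht, hs2, ht2, hst, hsum⟩ | hxΔ
  · exact Or.inl ⟨f s, mem_image_of_mem f hs, f t, mem_image_of_mem f ht, hs2.map_affine hf0,
      ht2.map_affine hf0, hf.ne hst, f.add_eq_two_smul hsum⟩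
  · exact Or.inr (mem_image_of_mem f hxΔ)

lemma image_MMS_subset {f : (Fin n → ℤ) →ᵃ[ℤ] (Fin n → ℤ)}
    (hf : Function.Injective f) (hf0 : Even2 (f 0)) (Δ : Set (Fin n → ℤ)) :
    f '' MMS Δ ⊆ MMS (f '' Δ) := by
  rintro _ ⟨x, ⟨L, hL, hxL⟩, rfl⟩
  exact ⟨f '' L, hL.image hf hf0, mem_image_of_mem f hxL⟩

lemma AffineEquiv.even2_symm_zero {e : (Fin n → ℤ) ≃ᵃ[ℤ] (Fin n → ℤ)}
    (he : Even2 (e 0)) : Even2 (e.symm 0) := by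
  have h0 : e.symm.linear (e 0) + e.symm 0 = 0 := by
    simpa using (congrFun e.symm.toAffineMap.decomp (e 0)).symm
  rw [eq_neg_of_add_eq_zero_right h0, ← map_neg]
  exact (show Even2 (-e 0) from fun i => dvd_neg.2 (he i)).map_linear e.symm.linear.toLinearMap

lemma AffineEquiv.image_MMS (e : (Fin n → ℤ) ≃ᵃ[ℤ] (Fin n → ℤ)) (he : Even2 (e 0))
    (Δ : Set (Fin n → ℤ)) : e '' MMS Δ = MMS (e '' Δ) := by
  refine (image_MMS_subset (f := e.toAffineMap) e.injective he Δ).antisymm fun y hy => ?_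
  have h := image_MMS_subset (f := e.symm.toAffineMap) e.symm.injective
    (e.even2_symm_zero he) (e '' Δ)
  simp only [AffineEquiv.coe_toAffineMap, image_image, AffineEquiv.symm_apply_apply,
    image_id'] at h
  exact ⟨e.symm y, h ⟨y, hy, rfl⟩, e.apply_symm_apply y⟩

lemma image_toR_image_of_comp {T : (Fin n → ℝ) → (Fin n → ℝ)} {e : (Fin n → ℤ) → (Fin n → ℤ)}
    (hTe : ∀ p, T (toR p) = toR (e p)) (X : Set (Fin n → ℤ)) :
    T '' (toR '' X) = toR '' (e '' X) := by
  simp only [image_image, hTe]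

lemma ImgZ_eq_image {T : (Fin n → ℝ) → (Fin n → ℝ)} {e : (Fin n → ℤ) → (Fin n → ℤ)}
    (hTe : ∀ p, T (toR p) = toR (e p)) (Δ : Set (Fin n → ℤ)) : ImgZ T Δ = e '' Δ := by
  rw [ImgZ, image_toR_image_of_comp hTe, preimage_image_eq _ toR_injective]

lemma convZ_image {T : (Fin n → ℝ) ≃ᵃ[ℝ] (Fin n → ℝ)} {e : (Fin n → ℤ) ≃ (Fin n → ℤ)}
    (hTe : ∀ p, T (toR p) = toR (e p)) (Δ : Set (Fin n → ℤ)) :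
    convZ (e '' Δ) = e '' convZ Δ := by
  ext p
  have hsymm : T.symm (toR p) = toR (e.symm p) := by
    rw [T.symm_apply_eq, hTe, e.apply_symm_apply]
  rw [e.image_eq_preimage_symm (convZ Δ), mem_preimage, convZ, convZ, mem_ofPred_eq,
    mem_ofPred_eq, ← hsymm, ← image_toR_image_of_comp hTe, ← AffineEquiv.coe_toAffineMap,
    ← AffineMap.image_convexHull, AffineEquiv.coe_toAffineMap, ← T.preimage_symm, mem_preimage]

lemma IsSimplicial.image {k : ℕ} {Δ : Set (Fin n → ℤ)} (hΔ : IsSimplicial k Δ)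
    {T : (Fin n → ℝ) →ᵃ[ℝ] (Fin n → ℝ)} (hT : Function.Injective T)
    {e : (Fin n → ℤ) →ᵃ[ℤ] (Fin n → ℤ)} (he : Even2 (e 0))
    (hTe : ∀ p, T (toR p) = toR (e p)) : IsSimplicial k (e '' Δ) := by
  obtain ⟨heven, f, rfl, hind⟩ := hΔ
  refine ⟨?_, e ∘ f, range_comp e f, ?_⟩
  · rintro _ ⟨p, hp, rfl⟩
    exact (heven p hp).map_affine he
  · simpa only [Function.comp_def, hTe] using hind.map' T hT

variable {T : (Fin n → ℝ) ≃ᵃ[ℝ] (Fin n → ℝ)} {e : (Fin n → ℤ) ≃ᵃ[ℤ] (Fin n → ℤ)}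

lemma image_toR_MMS (he : Even2 (e 0)) (hTe : ∀ p, T (toR p) = toR (e p))
    (Δ : Set (Fin n → ℤ)) : T '' (toR '' MMS Δ) = toR '' MMS (ImgZ T Δ) := by
  rw [image_toR_image_of_comp hTe, ImgZ_eq_image hTe, e.image_MMS he]

lemma mmsPreserving_of_comp_toR (he : Even2 (e 0)) (hTe : ∀ p, T (toR p) = toR (e p)) :
    MMSPreserving T := by
  intro k Δ hΔ
  refine ⟨⟨?_, ?_⟩, ?_, ?_⟩
  · rw [image_toR_image_of_comp hTe]
    exact image_subset_range _ _
  · rw [ImgZ_eq_image hTe]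
    exact hΔ.image (T := T.toAffineMap) T.injective (e := e.toAffineMap) he hTe
  · rw [← image_toR_MMS he hTe]
    exact T.injective.injOn.bijOn_image
  · rw [ImgZ_eq_image hTe, ← e.coe_toEquiv, convZ_image (e := e.toEquiv) hTe,
      AffineEquiv.coe_toEquiv, ← image_toR_image_of_comp hTe]
    exact T.injective.injOn.bijOn_image

end LatticeAffine

noncomputable def Matrix.toAffineEquiv' {ι R : Type*} [Fintype ι] [DecidableEq ι] [CommRing R]
    (A : Matrix ι ι R) (hA : IsUnit A.det) (b : ι → R) : (ι → R) ≃ᵃ[R] (ι → R) :=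
  (A.toLinearEquiv' (A.invertibleOfIsUnitDet hA)).toAffineEquiv.trans
    (AffineEquiv.constVAdd R (ι → R) b)

lemma Matrix.toAffineEquiv'_apply {ι R : Type*} [Fintype ι] [DecidableEq ι] [CommRing R]
    (A : Matrix ι ι R) (hA : IsUnit A.det) (b x : ι → R) :
    A.toAffineEquiv' hA b x = A *ᵥ x + b :=
  add_comm _ _

/-- Every unimodular affine transformation `T(x) = Ax + b` with `A ∈ GL_n(ℤ)` and
`b ∈ (2ℤ)^n` is MMS preserving; in particular `T(Δ*) = T(Δ)*` for every
simplicial set `Δ ⊆ (2ℤ)^n`. -/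
theorem unimodular_affine_is_mmsPreserving {n : ℕ}
    (A : Matrix (Fin n) (Fin n) ℤ) (hA : A.det = 1 ∨ A.det = -1)
    (b : Fin n → ℤ) (hb : Even2 b) :
    MMSPreserving (fun x => (A.map (Int.cast : ℤ → ℝ)).mulVec x + toR b) ∧
    ∀ (k : ℕ) (Δ : Set (Fin n → ℤ)), IsSimplicial k Δ →
      (fun x => (A.map (Int.cast : ℤ → ℝ)).mulVec x + toR b) '' (toR '' MMS Δ) =
        toR '' MMS (ImgZ (fun x => (A.map (Int.cast : ℤ → ℝ)).mulVec x + toR b) Δ) := by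
  have hunit : IsUnit A.det := by rcases hA with h | h <;> simp [h]
  have hAℝ : IsUnit (A.map (Int.cast : ℤ → ℝ)).det := by
    rw [← Int.cast_det]
    exact hunit.map (Int.castRingHom ℝ)
  set e := A.toAffineEquiv' hunit b
  set T := (A.map (Int.cast : ℤ → ℝ)).toAffineEquiv' hAℝ (toR b)
  have hT : (fun x => A.map (Int.cast : ℤ → ℝ) *ᵥ x + toR b) = T :=
    funext fun x => (Matrix.toAffineEquiv'_apply _ _ _ x).symm
  have hTe (p : Fin n → ℤ) : T (toR p) = toR (e p) := by
    rw [Matrix.toAffineEquiv'_apply, Matrix.toAffineEquiv'_apply, toR_mulVec_add]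
  have he : Even2 (e 0) := by
    rwa [Matrix.toAffineEquiv'_apply, Matrix.mulVec_zero, zero_add]
  rw [hT]
  exact ⟨mmsPreserving_of_comp_toR he hTe, fun _ Δ _ => image_toR_MMS he hTe Δ⟩
end
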